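/- arXiv:2512.23091 — 2 statements merged into one kernel-verified Lean document; each statement's English description precedes it below -/
import Mathlib

section
/- Let φ be a formal power series over ℚ with constant term 1 satisfying φ(X)^2 * (1 - 2X)^2 * (1 - 4X) = 1, and let ψ := (1/4) * φ', where φ' is the formal derivative of φ. Then ψ(X)^2 * (1 - 2X)^4 * (1 - 4X)^3 = (1 - 3X)^2; equivalently, ψ is the power series expansion of (1 - 3X)/((1 - 2X)^2 · √((1 - 4X)^3)). -/
/-!
Differentiating `φ² q = 1`, with `q = (1 - 2X)² (1 - 4X)`, and multiplying by `φ` gives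
`2 φ' = -φ³ q'`, because the factor `φ² q` that appears collapses to `1`.
Since `q' = -8 (1 - 2X)(1 - 3X)`, this yields `ψ = φ³ (1 - 2X)(1 - 3X)`, and then
`ψ² (1 - 2X)⁴ (1 - 4X)³ = (φ² q)³ (1 - 3X)² = (1 - 3X)²`.
-/

open PowerSeries

theorem Derivation.two_mul_apply_of_sq_mul_eq_one {R A : Type*} [CommSemiring R] [CommRing A]
    [Algebra R A] (D : Derivation R A A) {u q : A} (h : u ^ 2 * q = 1) :
    2 * D u = -(u ^ 3 * D q) := by
  have hD := congrArg D h
  simp only [Derivation.leibniz, Derivation.leibniz_pow, Derivation.map_one_eq_zero,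
    smul_eq_mul] at hD
  linear_combination u * hD - 2 * D u * h

namespace PowerSeries

variable {R : Type*} [CommRing R]

theorem derivative_one_sub_C_mul_X (a : R) : d⁄dX R (1 - C a * X) = -C a := by
  simp

theorem derivative_one_sub_two_X_sq_mul_one_sub_four_X :
    d⁄dX R ((1 - 2 * X) ^ 2 * (1 - 4 * X)) = -8 * (1 - 2 * X) * (1 - 3 * X) := by
  have h2 := derivative_one_sub_C_mul_X (2 : R)
  have h4 := derivative_one_sub_C_mul_X (4 : R)
  simp only [map_ofNat] at h2 h4
  rw [Derivation.leibniz, Derivation.leibniz_pow, h2, h4, smul_eq_mul, smul_eq_mul]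
  ring

end PowerSeries

theorem stmt_3_general (φ : PowerSeries ℚ)
    (hφ : φ ^ 2 * (1 - 2 * X) ^ 2 * (1 - 4 * X) = 1)
    (ψ : PowerSeries ℚ)
    (hψ : ψ = PowerSeries.C (R := ℚ) (1 / 4) * PowerSeries.derivative ℚ φ) :
    ψ ^ 2 * (1 - 2 * X) ^ 4 * (1 - 4 * X) ^ 3 = (1 - 3 * X) ^ 2 := by
  rw [mul_assoc] at hφ
  have hφ' := (d⁄dX ℚ).two_mul_apply_of_sq_mul_eq_one hφ
  rw [derivative_one_sub_two_X_sq_mul_one_sub_four_X] at hφ'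
  have h2 : (2 : ℚ⟦X⟧) ≠ 0 := by
    rw [← map_ofNat C 2, ← map_zero C]
    exact C_injective.ne two_ne_zero
  have hDφ : d⁄dX ℚ φ = 4 * φ ^ 3 * (1 - 2 * X) * (1 - 3 * X) :=
    mul_left_cancel₀ h2 (by linear_combination hφ')
  have hC : C (1 / 4 : ℚ) * 4 = 1 := by
    rw [← map_ofNat C 4, ← map_mul]
    norm_num
  have hψ' : ψ = φ ^ 3 * (1 - 2 * X) * (1 - 3 * X) := by
    rw [hψ, hDφ]
    linear_combination φ ^ 3 * (1 - 2 * X) * (1 - 3 * X) * hC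
  calc ψ ^ 2 * (1 - 2 * X) ^ 4 * (1 - 4 * X) ^ 3
      = (φ ^ 2 * ((1 - 2 * X) ^ 2 * (1 - 4 * X))) ^ 3 * (1 - 3 * X) ^ 2 := by
        rw [hψ']
        ring
    _ = (1 - 3 * X) ^ 2 := by rw [hφ, one_pow, one_mul]

theorem stmt_3 (φ : PowerSeries ℚ)
    (hconst : PowerSeries.constantCoeff (R := ℚ) φ = 1)
    (hφ : φ ^ 2 * (1 - 2 * X) ^ 2 * (1 - 4 * X) = 1)
    (ψ : PowerSeries ℚ)
    (hψ : ψ = PowerSeries.C (R := ℚ) (1 / 4) * PowerSeries.derivative ℚ φ) :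
    ψ ^ 2 * (1 - 2 * X) ^ 4 * (1 - 4 * X) ^ 3 = (1 - 3 * X) ^ 2 :=
  stmt_3_general φ hφ ψ hψ
end

section
/- Let S(k) denote the sum over all quadruples of nonnegative integers (x1, x2, x3, x4) with x1 + x2 + x3 + x4 = k of the product binom(x1+x2, x1) * binom(x2+x3, x2) * binom(x3+x4, x3) * binom(x4+x1, x4). Then for every nonnegative integer k, the integer (k+1) * S(k+1) is divisible by 4. -/
/-!
Rotating a quadruple cyclically preserves both the constraint `x₁ + x₂ + x₃ + x₄ = n` and the
product of binomial coefficients, so `ℤ/4` acts on the terms of `S n`. On quadruples not fixed by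
the half-turn the action is free, so their orbits contribute multiples of `4`, and `S n` is
congruent mod `4` to the sum over the quadruples `(a, b, a, b)`. There are none for odd `n`; for
`n = 2m` they contribute `∑ₐ C(m, a)⁴ ≡ ∑ₐ C(m, a) = 2ᵐ ≡ 0 (mod 2)`, which together with the
factor `n = 2m` gives divisibility by `4`.
-/

/-- `S k` is the sum over all quadruples of nonnegative integers
`(x₁, x₂, x₃, x₄)` with `x₁ + x₂ + x₃ + x₄ = k` of
`C(x₁+x₂, x₁) * C(x₂+x₃, x₂) * C(x₃+x₄, x₃) * C(x₄+x₁, x₄)`. -/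
def S (k : ℕ) : ℕ :=
  ∑ x ∈ Finset.Nat.antidiagonalTuple 4 k,
    Nat.choose (x 0 + x 1) (x 0) * Nat.choose (x 1 + x 2) (x 1) *
      Nat.choose (x 2 + x 3) (x 2) * Nat.choose (x 3 + x 0) (x 3)

open Finset

theorem AddAction.card_dvd_sum_of_free {G α : Type*} [AddGroup G] [Fintype G] [AddAction G α]
    {s : Finset α} (hs : ∀ g : G, ∀ x ∈ s, g +ᵥ x ∈ s) (f : α → ℕ)
    (hf : ∀ g : G, ∀ x ∈ s, f (g +ᵥ x) = f x) (hfree : ∀ x ∈ s, ∀ g : G, g +ᵥ x = x → g = 0) :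
    Fintype.card G ∣ ∑ x ∈ s, f x := by
  classical
  let π : α → orbitRel.Quotient G α := Quotient.mk _
  rw [← sum_fiberwise_of_maps_to (t := s.image π) (fun x hx => mem_image_of_mem π hx)]
  refine dvd_sum fun ω hω => ?_
  obtain ⟨c, hc, rfl⟩ := mem_image.1 hω
  have hfiber : {x ∈ s | π x = π c} = univ.image (fun g : G => g +ᵥ c) := by
    ext x
    simp only [mem_filter, mem_image, mem_univ, true_and, π, Quotient.eq, orbitRel_apply,
      mem_orbit_iff]
    exact ⟨fun ⟨_, g, hg⟩ => ⟨g, hg⟩, fun ⟨g, hg⟩ => ⟨hg ▸ hs g c hc, g, hg⟩⟩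
  have hinj : Function.Injective (fun g : G => g +ᵥ c) := fun g h hgh => by
    have := hfree c hc (-h + g) (by rw [add_vadd, show g +ᵥ c = h +ᵥ c from hgh, neg_vadd_vadd])
    rwa [neg_add_eq_zero, eq_comm] at this
  rw [hfiber, sum_image hinj.injOn, sum_congr rfl fun g _ => hf g c hc, sum_const, card_univ,
    smul_eq_mul]
  exact dvd_mul_right _ _

/-- Every nonzero element of `ℤ/4` generates a subgroup containing `2`. -/
lemma Fin.two_vadd_eq_self_of_vadd_eq_self {α : Type*} [AddAction (Fin 4) α] {g : Fin 4} {x : α}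
    (hg : g ≠ 0) (h : g +ᵥ x = x) : (2 : Fin 4) +ᵥ x = x := by
  have h2 : (g + g) +ᵥ x = x := by rw [add_vadd, h, h]
  fin_cases g
  · exact absurd rfl hg
  · exact h2
  · exact h
  · exact h2

lemma Nat.two_dvd_sum_choose_pow {m e : ℕ} (hm : m ≠ 0) (he : e ≠ 0) :
    2 ∣ ∑ a ∈ range (m + 1), m.choose a ^ e := by
  have hpow : ∀ y : ZMod 2, y ^ e = y := by
    intro y
    fin_cases y
    · exact zero_pow he
    · exact one_pow e
  rw [← ZMod.natCast_eq_zero_iff]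
  push_cast
  simp only [hpow]
  rw [← Nat.cast_sum, Nat.sum_range_choose, Nat.cast_pow, ZMod.natCast_self, zero_pow hm]

def cyclicChoose {n : ℕ} [NeZero n] (x : Fin n → ℕ) : ℕ :=
  ∏ i, (x i + x (i + 1)).choose (x i)

lemma cyclicChoose_four (x : Fin 4 → ℕ) :
    cyclicChoose x = (x 0 + x 1).choose (x 0) * (x 1 + x 2).choose (x 1) *
      (x 2 + x 3).choose (x 2) * (x 3 + x 0).choose (x 3) := by
  rw [cyclicChoose, Fin.prod_univ_four]
  rfl

lemma S_eq_sum_cyclicChoose (k : ℕ) :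
    S k = ∑ x ∈ Nat.antidiagonalTuple 4 k, cyclicChoose x := by
  simp only [S, cyclicChoose_four]

def halfTurnInvariant (k : ℕ) : Finset (Fin 4 → ℕ) :=
  {x ∈ Nat.antidiagonalTuple 4 k | x 2 = x 0 ∧ x 3 = x 1}

lemma mem_halfTurnInvariant {k : ℕ} {x : Fin 4 → ℕ} :
    x ∈ halfTurnInvariant k ↔ x 0 + x 1 + x 2 + x 3 = k ∧ x 2 = x 0 ∧ x 3 = x 1 := by
  rw [halfTurnInvariant, mem_filter, Nat.mem_antidiagonalTuple, Fin.sum_univ_four]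

lemma sum_halfTurnInvariant_two_mul (m : ℕ) :
    ∑ x ∈ halfTurnInvariant (2 * m), cyclicChoose x = ∑ a ∈ range (m + 1), m.choose a ^ 4 := by
  refine sum_nbij' (fun x => x 0) (fun a => ![a, m - a, a, m - a]) ?_ ?_ ?_ ?_ ?_
  · intro x hx
    rw [mem_halfTurnInvariant] at hx
    rw [mem_range]
    omega
  · intro a ha
    rw [mem_range] at ha
    simp only [mem_halfTurnInvariant, Matrix.cons_val, and_true]
    omega
  · intro x hx
    rw [mem_halfTurnInvariant] at hx
    ext i
    fin_cases i <;> simp only [Fin.zero_eta, Fin.mk_one, Fin.reduceFinMk, Matrix.cons_val] <;> omega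
  · intro a _
    rfl
  · intro x hx
    obtain ⟨hsum, h2, h3⟩ := mem_halfTurnInvariant.1 hx
    have hm : x 0 + x 1 = m := by omega
    rw [cyclicChoose_four, h2, h3, add_comm (x 1), ← Nat.choose_symm_add, hm]
    ring

lemma halfTurnInvariant_odd (m : ℕ) : halfTurnInvariant (2 * m + 1) = ∅ :=
  eq_empty_of_forall_notMem fun x hx => by
    rw [mem_halfTurnInvariant] at hx
    omega

lemma four_dvd_mul_sum_halfTurnInvariant {n : ℕ} (hn : n ≠ 0) :
    4 ∣ n * ∑ x ∈ halfTurnInvariant n, cyclicChoose x := by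
  obtain ⟨m, rfl | rfl⟩ := Nat.even_or_odd' n
  · obtain ⟨j, hj⟩ := Nat.two_dvd_sum_choose_pow (m := m) (by omega) four_ne_zero
    rw [sum_halfTurnInvariant_two_mul, hj]
    exact ⟨m * j, by ring⟩
  · rw [halfTurnInvariant_odd, sum_empty, mul_zero]
    exact dvd_zero 4

section Rotation

attribute [local instance] arrowAddAction

variable {n : ℕ} [NeZero n]

lemma Fin.vadd_tuple_apply {β : Type*} (g : Fin n) (x : Fin n → β) (i : Fin n) :
    (g +ᵥ x) i = x (-g + i) := rfl

lemma cyclicChoose_vadd (g : Fin n) (x : Fin n → ℕ) : cyclicChoose (g +ᵥ x) = cyclicChoose x := by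
  simp only [cyclicChoose, Fin.vadd_tuple_apply, ← add_assoc]
  exact Equiv.prod_comp (Equiv.addLeft (-g)) fun i => (x i + x (i + 1)).choose (x i)

lemma vadd_mem_antidiagonalTuple {g : Fin n} {x : Fin n → ℕ} {k : ℕ} :
    g +ᵥ x ∈ Nat.antidiagonalTuple n k ↔ x ∈ Nat.antidiagonalTuple n k := by
  simp only [Nat.mem_antidiagonalTuple, Fin.vadd_tuple_apply]
  exact Iff.of_eq (congrArg (· = k) (Equiv.sum_comp (Equiv.addLeft (-g)) x))

lemma Fin.two_vadd_eq_self_iff {β : Type*} (x : Fin 4 → β) :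
    (2 : Fin 4) +ᵥ x = x ↔ x 2 = x 0 ∧ x 3 = x 1 := by
  refine ⟨fun h => ⟨congrFun h 0, congrFun h 1⟩, fun ⟨h2, h3⟩ => funext fun i => ?_⟩
  fin_cases i
  · exact h2
  · exact h3
  · exact h2.symm
  · exact h3.symm

lemma S_modEq_sum_halfTurnInvariant (k : ℕ) :
    S k ≡ ∑ x ∈ halfTurnInvariant k, cyclicChoose x [MOD 4] := by
  rw [S_eq_sum_cyclicChoose, halfTurnInvariant,
    ← sum_filter_add_sum_filter_not _ (fun x : Fin 4 → ℕ => x 2 = x 0 ∧ x 3 = x 1)]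
  set N : Finset (Fin 4 → ℕ) := {x ∈ Nat.antidiagonalTuple 4 k | ¬(x 2 = x 0 ∧ x 3 = x 1)}
  have hN {x : Fin 4 → ℕ} : x ∈ N ↔ x ∈ Nat.antidiagonalTuple 4 k ∧ ¬(2 : Fin 4) +ᵥ x = x := by
    rw [mem_filter, Fin.two_vadd_eq_self_iff]
  have hinv : ∀ g : Fin 4, ∀ x ∈ N, g +ᵥ x ∈ N := by
    intro g x hx
    rw [hN] at hx ⊢
    rw [vadd_mem_antidiagonalTuple]
    refine ⟨hx.1, fun h => hx.2 (vadd_left_cancel g ?_)⟩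
    rwa [vadd_vadd, add_comm, ← vadd_vadd]
  have hfree : ∀ x ∈ N, ∀ g : Fin 4, g +ᵥ x = x → g = 0 := by
    intro x hx g hg
    by_contra hg0
    exact (hN.1 hx).2 (Fin.two_vadd_eq_self_of_vadd_eq_self hg0 hg)
  have h4 := AddAction.card_dvd_sum_of_free hinv _ (fun g x _ => cyclicChoose_vadd g x) hfree
  rw [Fintype.card_fin] at h4
  exact Nat.add_modEq_left_iff.2 h4

end Rotation

theorem stmt_5 (k : ℕ) : 4 ∣ (k + 1) * S (k + 1) :=
  ((S_modEq_sum_halfTurnInvariant (k + 1)).mul_left (k + 1) |>.dvd_iff dvd_rfl).2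
    (four_dvd_mul_sum_halfTurnInvariant k.succ_ne_zero)
end
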